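/- Fix λ ∈ (0,∞) and θ ∈ ℝ, and define Λ_max(t) = max_{0 ≤ a ≤ 1} Λ(a, θ+t, λ) for t ∈ ℝ. Then Λ_max is differentiable at t = 0 and dΛ_max/dt |_{t=0} = a*, where a* is the unique maximizer of a ↦ Λ(a,θ,λ) over [0,1]. -/

import Mathlib

/-! Danskin's envelope theorem for the linear perturbation `g + t · id` of a continuous `g` with a
unique maximizer `a` on a compact `K ⊆ ℝ`. With `F t = max_K (g + t · id)` and any maximizer `b`
of `g + t · id`, the sandwich `t * a ≤ F t - F 0 ≤ t * b` holds, so it suffices that these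
maximizers tend to `a` as `t → 0`; this follows from compactness, since `g` stays a fixed amount
below `g a` away from `a`. -/

noncomputable section

/-- `Λ(a, θ, λ)` (note `Real.log 0 = 0`, so `0 log 0 = 0` is automatic). -/
def Lam (a θ lam : ℝ) : ℝ :=
  θ * a - (1 - a) * Real.log (1 - a) - a / 3 * Real.log (a / 3) -
    2 / 3 * a - a / 3 * Real.log 6 + a * Real.log lam

open Filter Topology Set

theorem IsMaxOn.csSup_image_eq {α β : Type*} [ConditionallyCompleteLattice α] {f : β → α}
    {K : Set β} {b : β} (h : IsMaxOn f K b) (hb : b ∈ K) : sSup (f '' K) = f b :=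
  IsGreatest.csSup_eq ⟨mem_image_of_mem f hb, forall_mem_image.2 fun _ hx => h hx⟩

section Envelope

variable {K : Set ℝ} {g : ℝ → ℝ} {a : ℝ}

theorem eventually_abs_sub_lt_of_isMaxOn_add_mul (hK : IsCompact K) (hg : ContinuousOn g K)
    (ha : a ∈ K) (hmax : IsMaxOn g K a) (huniq : ∀ b ∈ K, IsMaxOn g K b → b = a) {ε : ℝ}
    (hε : 0 < ε) :
    ∀ᶠ t in 𝓝 0, ∀ b ∈ K, IsMaxOn (fun x => g x + t * x) K b → |b - a| < ε := by
  set S := K ∩ {b | ε ≤ |b - a|}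
  rcases S.eq_empty_or_nonempty with hS | hS
  · refine .of_forall fun t b hb _ => not_le.1 fun hfar => ?_
    exact (eq_empty_iff_forall_notMem.1 hS) b ⟨hb, hfar⟩
  have hSc : IsCompact S :=
    hK.inter_right (isClosed_le continuous_const (by fun_prop))
  obtain ⟨c, hcS, hcmax⟩ := hSc.exists_isMaxOn hS (hg.mono inter_subset_left)
  have hgap : g c < g a := by
    refine (hmax hcS.1).lt_of_ne fun hca => ?_
    have hc : c = a := huniq c hcS.1 fun x hx => hca ▸ hmax hx
    have hfar : ε ≤ |c - a| := hcS.2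
    rw [hc, sub_self, abs_zero] at hfar
    linarith
  obtain ⟨C, hC⟩ := hK.exists_bound_of_continuousOn (f := fun x => x - a) (by fun_prop)
  have hsmall : ∀ᶠ t in 𝓝 (0 : ℝ), |t| * C < g a - g c := by
    have hlim : Tendsto (fun t : ℝ => |t| * C) (𝓝 0) (𝓝 0) :=
      Continuous.tendsto' (by fun_prop) 0 0 (by simp)
    exact hlim.eventually (gt_mem_nhds (sub_pos.2 hgap))
  filter_upwards [hsmall] with t ht b hb hbmax
  refine not_le.1 fun hfar => ?_
  have hgb : g b ≤ g c := hcmax ⟨hb, hfar⟩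
  have hab : g a + t * a ≤ g b + t * b := hbmax ha
  have hdrift : t * (b - a) ≤ |t| * C :=
    (le_abs_self _).trans <| by
      rw [abs_mul]; exact mul_le_mul_of_nonneg_left (hC b hb) (abs_nonneg t)
  linarith [mul_sub t b a]

theorem hasDerivAt_sSup_image_add_mul (hK : IsCompact K) (hg : ContinuousOn g K) (ha : a ∈ K)
    (hmax : IsMaxOn g K a) (huniq : ∀ b ∈ K, IsMaxOn g K b → b = a) :
    HasDerivAt (fun t => sSup ((fun x => g x + t * x) '' K)) a 0 := by
  set F := fun t : ℝ => sSup ((fun x => g x + t * x) '' K)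
  have hF0 : F 0 = g a := by simpa [F] using hmax.csSup_image_eq ha
  have hmaximizer : ∀ t, ∃ b ∈ K, IsMaxOn (fun x => g x + t * x) K b :=
    fun t => hK.exists_isMaxOn ⟨a, ha⟩ (hg.add (by fun_prop))
  have hsandwich : ∀ t, ∀ b ∈ K, IsMaxOn (fun x => g x + t * x) K b →
      |F t - F 0 - t * a| ≤ |t| * |b - a| := by
    intro t b hb hbmax
    have hFt : F t = g b + t * b := hbmax.csSup_image_eq hb
    have hlower : g a + t * a ≤ g b + t * b := hbmax ha
    have hupper : g b ≤ g a := hmax hb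
    rw [← abs_mul, hFt, hF0, abs_of_nonneg (by linarith)]
    exact (by linarith : _ ≤ t * (b - a)).trans (le_abs_self _)
  rw [hasDerivAt_iff_isLittleO_nhds_zero, Asymptotics.isLittleO_iff]
  intro ε hε
  filter_upwards [eventually_abs_sub_lt_of_isMaxOn_add_mul hK hg ha hmax huniq hε] with t hclose
  obtain ⟨b, hb, hbmax⟩ := hmaximizer t
  simp only [zero_add, smul_eq_mul, Real.norm_eq_abs]
  calc |F t - F 0 - t * a| ≤ |t| * |b - a| := hsandwich t b hb hbmax
    _ ≤ ε * |t| := by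
      rw [mul_comm ε]; exact mul_le_mul_of_nonneg_left (hclose b hb hbmax).le (abs_nonneg t)

end Envelope

theorem Lam_theta_add (a θ t lam : ℝ) : Lam a (θ + t) lam = Lam a θ lam + t * a := by
  unfold Lam; ring

theorem continuous_Lam (θ lam : ℝ) : Continuous fun a => Lam a θ lam := by
  have h₁ : Continuous fun a : ℝ => (1 - a) * Real.log (1 - a) :=
    Real.continuous_mul_log.comp (by fun_prop)
  have h₂ : Continuous fun a : ℝ => a / 3 * Real.log (a / 3) :=
    Real.continuous_mul_log.comp (by fun_prop)
  unfold Lam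
  fun_prop

theorem stmt16_general (lam θ : ℝ) (astar : ℝ)
    (h1 : astar ∈ Set.Icc (0 : ℝ) 1)
    (h2 : ∀ a ∈ Set.Icc (0 : ℝ) 1, Lam a θ lam ≤ Lam astar θ lam)
    (h3 : ∀ a ∈ Set.Icc (0 : ℝ) 1,
      (∀ b ∈ Set.Icc (0 : ℝ) 1, Lam b θ lam ≤ Lam a θ lam) → a = astar) :
    HasDerivAt (fun t : ℝ => sSup ((fun a => Lam a (θ + t) lam) '' Set.Icc (0 : ℝ) 1))
      astar 0 := by
  simp only [Lam_theta_add]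
  exact hasDerivAt_sSup_image_add_mul isCompact_Icc (continuous_Lam θ lam).continuousOn h1
    (isMaxOn_iff.2 h2) fun b hb hbmax => h3 b hb (isMaxOn_iff.1 hbmax)

/-- Lemma 3.5: `Λ_max(t) = max_{a∈[0,1]} Λ(a, θ+t, λ)` is differentiable at
`t = 0` with derivative `a*`, the unique maximizer of `a ↦ Λ(a,θ,λ)` over `[0,1]`. -/
theorem stmt16 (lam θ : ℝ) (hlam : 0 < lam) (astar : ℝ)
    (h1 : astar ∈ Set.Icc (0 : ℝ) 1)
    (h2 : ∀ a ∈ Set.Icc (0 : ℝ) 1, Lam a θ lam ≤ Lam astar θ lam)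
    (h3 : ∀ a ∈ Set.Icc (0 : ℝ) 1,
      (∀ b ∈ Set.Icc (0 : ℝ) 1, Lam b θ lam ≤ Lam a θ lam) → a = astar) :
    HasDerivAt (fun t : ℝ => sSup ((fun a => Lam a (θ + t) lam) '' Set.Icc (0 : ℝ) 1))
      astar 0 :=
  stmt16_general lam θ astar h1 h2 h3

end
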